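/- arXiv:2106.06668 — 5 statements merged into one kernel-verified Lean document; each statement's English description precedes it below -/
import Mathlib

section
/- Let H be the 3×3 complex Hermitian matrix with rows (0,0,1), (0,1,0), (1,0,0), and let I₁ = [[-1,0,0],[0,1,0],[0,0,-1]], I₂ = [[-1,-2,2],[0,1,-2],[0,0,-1]], I₃ = [[-1,0,0],[(3+√3·i)/2,1,0],[3/2,(3-√3·i)/2,-1]] be 3×3 complex matrices. Then for each j ∈ {1,2,3}: Iⱼ* H Iⱼ = H (where Iⱼ* is the conjugate transpose), det Iⱼ = 1, and Iⱼ² is the identity matrix. In particular I₁, I₂, I₃ are involutions lying in SU(2,1). -/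
open Matrix

/-- The Hermitian form matrix of signature (2,1). -/
noncomputable def Hmat : Matrix (Fin 3) (Fin 3) ℂ := !![0,0,1; 0,1,0; 1,0,0]

/-- The first generator of the Δ(3,∞,∞;∞) triangle group. -/
noncomputable def I₁ : Matrix (Fin 3) (Fin 3) ℂ := !![-1,0,0; 0,1,0; 0,0,-1]

/-- The second generator of the Δ(3,∞,∞;∞) triangle group. -/
noncomputable def I₂ : Matrix (Fin 3) (Fin 3) ℂ := !![-1,-2,2; 0,1,-2; 0,0,-1]

/-- The third generator of the Δ(3,∞,∞;∞) triangle group. -/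
noncomputable def I₃ : Matrix (Fin 3) (Fin 3) ℂ :=
  !![-1, 0, 0;
     (3 + (Real.sqrt 3 : ℂ) * Complex.I) / 2, 1, 0;
     3/2, (3 - (Real.sqrt 3 : ℂ) * Complex.I) / 2, -1]

lemma sq3 : (Real.sqrt 3 : ℂ) ^ 2 = 3 := by
  rw [← Complex.ofReal_pow, Real.sq_sqrt (by norm_num)]; norm_num

set_option linter.unnecessarySeqFocus false in
theorem generators_in_SU21_and_involutions :
    (I₁ᴴ * Hmat * I₁ = Hmat ∧ I₁.det = 1 ∧ I₁ ^ 2 = 1) ∧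
    (I₂ᴴ * Hmat * I₂ = Hmat ∧ I₂.det = 1 ∧ I₂ ^ 2 = 1) ∧
    (I₃ᴴ * Hmat * I₃ = Hmat ∧ I₃.det = 1 ∧ I₃ ^ 2 = 1) := by
  have hconj : (starRingEnd ℂ) (Real.sqrt 3 : ℂ) = (Real.sqrt 3 : ℂ) := Complex.conj_ofReal _
  refine ⟨⟨?_, ?_, ?_⟩, ⟨?_, ?_, ?_⟩, ⟨?_, ?_, ?_⟩⟩
  · ext i j
    fin_cases i <;> fin_cases j <;>
      simp [Hmat, I₁, Matrix.mul_apply, Fin.sum_univ_succ, Matrix.vecHead, Matrix.vecTail]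
  · simp [I₁, Matrix.det_fin_three]
  · rw [pow_two]; ext i j
    fin_cases i <;> fin_cases j <;>
      simp [I₁, Matrix.mul_apply, Fin.sum_univ_succ, Matrix.one_apply, Matrix.vecHead,
        Matrix.vecTail]
  · ext i j
    fin_cases i <;> fin_cases j <;>
      simp [Hmat, I₂, Matrix.mul_apply, Fin.sum_univ_succ, Matrix.vecHead, Matrix.vecTail,
        map_ofNat] <;> ring_nf
  · simp [I₂, Matrix.det_fin_three, Matrix.vecHead, Matrix.vecTail]
  · rw [pow_two]; ext i j
    fin_cases i <;> fin_cases j <;>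
      simp [I₂, Matrix.mul_apply, Fin.sum_univ_succ, Matrix.one_apply, Matrix.vecHead,
        Matrix.vecTail] <;> ring_nf
  · ext i j
    fin_cases i <;> fin_cases j <;>
      simp [Hmat, I₃, Matrix.mul_apply, Fin.sum_univ_succ, hconj, Matrix.vecHead, Matrix.vecTail,
        map_ofNat] <;>
      ring_nf <;> simp [sq3, Complex.ext_iff] <;> ring_nf
  · simp [I₃, Matrix.det_fin_three]
  · rw [pow_two]; ext i j
    fin_cases i <;> fin_cases j <;>
      simp [I₃, Matrix.mul_apply, Fin.sum_univ_succ, Matrix.one_apply, Matrix.vecHead,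
        Matrix.vecTail] <;>
      ring_nf <;> simp [sq3, Complex.ext_iff] <;> ring_nf
end

section
/- For every nonzero integer k, the extended Cygan spheres of radius 2/√3 centered at the boundary points (0, 0) and (−2k, 8k/√3) of the Heisenberg group are disjoint subsets of ℂ × ℝ × ℝ≥0; that is, there is no point (z,t,u) with u ≥ 0 satisfying both | |z|² + u − i·t | = 4/3 and | |z+2k|² + u − i·(t − 8k/√3 + 2·Im(z·(−2k))) | = 4/3. -/
/-!
Write `F(p, q) = |z - w|² + |u - v| - i(t - s + 2 Im(z w̄))`, so that the extended Cygan distance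
is `|F(p, q)|^{1/2}`. Up to the nonnegative real `|u₁ - u₂| + |u₂ - u₃| - |u₁ - u₃|`, the form
satisfies the cocycle identity `F(p, q) = F(p, r) + F(r, q) + 2 (z₁ - z₂) conj(z₂ - z₃)`, and
`|z₁ - z₂|² ≤ |F(p, r)|`; this gives the triangle inequality. A common point of the two spheres
would therefore put their centres at distance at most `4/√3`, whereas
`|F| = (16 k⁴ + 64 k² / 3)^{1/2} ≥ (112/3)^{1/2} > 16/3`.
-/

open Complex ComplexConjugate

/-- The square of the extended Cygan distance, as a complex number; the third coordinate `u` is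
allowed to be any real, since the triangle inequality does not need `u ≥ 0`. -/
noncomputable def cyganForm (p q : ℂ × ℝ × ℝ) : ℂ :=
  ((‖p.1 - q.1‖ ^ 2 + |p.2.2 - q.2.2| : ℝ) : ℂ) -
    ((p.2.1 - q.2.1 + 2 * (p.1 * conj q.1).im : ℝ) : ℂ) * I

noncomputable def extCyganDist (p q : ℂ × ℝ × ℝ) : ℝ := √‖cyganForm p q‖

lemma cyganForm_re (p q : ℂ × ℝ × ℝ) :
    (cyganForm p q).re = ‖p.1 - q.1‖ ^ 2 + |p.2.2 - q.2.2| := by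
  simp only [cyganForm, sub_re, mul_re, ofReal_re, ofReal_im, I_re, I_im]
  ring

lemma cyganForm_im (p q : ℂ × ℝ × ℝ) :
    (cyganForm p q).im = -(p.2.1 - q.2.1 + 2 * (p.1 * conj q.1).im) := by
  simp only [cyganForm, sub_im, mul_im, ofReal_re, ofReal_im, I_re, I_im]
  ring

lemma sq_norm_cyganForm (p q : ℂ × ℝ × ℝ) :
    ‖cyganForm p q‖ ^ 2 =
      (‖p.1 - q.1‖ ^ 2 + |p.2.2 - q.2.2|) ^ 2 + (p.2.1 - q.2.1 + 2 * (p.1 * conj q.1).im) ^ 2 := by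
  rw [Complex.sq_norm, normSq_apply, cyganForm_re, cyganForm_im]
  ring

lemma cyganForm_comm (p q : ℂ × ℝ × ℝ) : cyganForm q p = conj (cyganForm p q) := by
  apply Complex.ext
  · simp only [cyganForm_re, conj_re, norm_sub_rev, abs_sub_comm]
  · simp only [cyganForm_im, conj_im, mul_im, conj_re, conj_im]
    ring

lemma extCyganDist_comm (p q : ℂ × ℝ × ℝ) : extCyganDist p q = extCyganDist q p := by
  rw [extCyganDist, extCyganDist, cyganForm_comm p q, norm_conj]

lemma norm_sub_le_extCyganDist (p q : ℂ × ℝ × ℝ) : ‖p.1 - q.1‖ ≤ extCyganDist p q := by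
  refine Real.le_sqrt_of_sq_le ?_
  calc ‖p.1 - q.1‖ ^ 2 ≤ (cyganForm p q).re := by
        rw [cyganForm_re]; exact le_add_of_nonneg_right (abs_nonneg _)
    _ ≤ ‖cyganForm p q‖ := re_le_norm _

lemma cyganForm_add_cyganForm (p r q : ℂ × ℝ × ℝ) :
    cyganForm p r + cyganForm r q + 2 * ((p.1 - r.1) * conj (r.1 - q.1)) =
      cyganForm p q + ((|p.2.2 - r.2.2| + |r.2.2 - q.2.2| - |p.2.2 - q.2.2| : ℝ) : ℂ) := by
  apply Complex.ext
  · simp only [add_re, cyganForm_re, mul_re, ofReal_re, Complex.sq_norm, normSq_apply, sub_re,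
      sub_im, re_ofNat, im_ofNat, map_sub, conj_re, conj_im, mul_im]
    ring
  · simp only [add_im, cyganForm_im, mul_im, ofReal_im, re_ofNat, im_ofNat, sub_re, sub_im,
      map_sub, conj_re, conj_im, mul_re]
    ring

lemma norm_le_norm_add_ofReal {ζ : ℂ} (hζ : 0 ≤ ζ.re) {a : ℝ} (ha : 0 ≤ a) :
    ‖ζ‖ ≤ ‖ζ + a‖ := by
  rw [← sq_le_sq₀ (norm_nonneg _) (norm_nonneg _), Complex.sq_norm, Complex.sq_norm,
    normSq_apply, normSq_apply]
  simp only [add_re, ofReal_re, add_im, ofReal_im, add_zero]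
  nlinarith

lemma extCyganDist_triangle (p r q : ℂ × ℝ × ℝ) :
    extCyganDist p q ≤ extCyganDist p r + extCyganDist r q := by
  have hδ : 0 ≤ |p.2.2 - r.2.2| + |r.2.2 - q.2.2| - |p.2.2 - q.2.2| :=
    sub_nonneg.2 (abs_sub_le _ _ _)
  have hre : 0 ≤ (cyganForm p q).re := by rw [cyganForm_re]; positivity
  have key : ‖cyganForm p q‖ ≤ (extCyganDist p r + extCyganDist r q) ^ 2 :=
    calc ‖cyganForm p q‖
        ≤ ‖cyganForm p r + cyganForm r q + 2 * ((p.1 - r.1) * conj (r.1 - q.1))‖ := by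
          rw [cyganForm_add_cyganForm]; exact norm_le_norm_add_ofReal hre hδ
      _ ≤ ‖cyganForm p r‖ + ‖cyganForm r q‖ + 2 * (‖p.1 - r.1‖ * ‖r.1 - q.1‖) := by
          refine (norm_add_le _ _).trans (add_le_add (norm_add_le _ _) ?_)
          rw [norm_mul, norm_mul, Complex.norm_two, norm_conj]
      _ ≤ extCyganDist p r ^ 2 + extCyganDist r q ^ 2
            + 2 * (extCyganDist p r * extCyganDist r q) := by
          rw [extCyganDist, extCyganDist, Real.sq_sqrt (norm_nonneg _),
            Real.sq_sqrt (norm_nonneg _)]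
          gcongr
          · exact norm_sub_le_extCyganDist p r
          · exact norm_sub_le_extCyganDist r q
      _ = (extCyganDist p r + extCyganDist r q) ^ 2 := by ring
  exact (Real.sqrt_le_sqrt key).trans_eq
    (Real.sqrt_sq (add_nonneg (Real.sqrt_nonneg _) (Real.sqrt_nonneg _)))

lemma sixteen_div_three_lt_norm_cyganForm_zero (k : ℤ) (hk : k ≠ 0) :
    16 / 3 < ‖cyganForm (0, 0, 0) (-2 * k, 8 * k / √3, 0)‖ := by
  have hk2 : (1 : ℝ) ≤ (k : ℝ) ^ 2 :=
    (one_le_sq_iff_one_le_abs _).2 (by exact_mod_cast Int.one_le_abs hk)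
  refine lt_of_pow_lt_pow_left₀ 2 (norm_nonneg _) ?_
  rw [sq_norm_cyganForm]
  simp only [zero_sub, neg_mul, neg_neg, norm_mul, norm_ofNat, norm_intCast, mul_pow, sq_abs,
    sub_self, abs_zero, add_zero, zero_mul, zero_im, mul_zero, even_two, Even.neg_pow, div_pow,
    Nat.ofNat_nonneg, Real.sq_sqrt]
  nlinarith

theorem isometric_spheres_Ikplus_disjoint (k : ℤ) (hk : k ≠ 0) :
    ∀ (z : ℂ) (t u : ℝ), 0 ≤ u →
      ¬ (‖((‖z‖ ^ 2 + u : ℝ) : ℂ) - (t : ℂ) * Complex.I‖ = 4/3 ∧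
         ‖((‖z + 2 * (k : ℂ)‖ ^ 2 + u : ℝ) : ℂ) -
           ((t - 8 * (k : ℝ) / Real.sqrt 3 + 2 * (z * (-2 * (k : ℂ))).im : ℝ) : ℂ)
             * Complex.I‖ = 4/3) := by
  rintro z t u hu ⟨h₀, hₖ⟩
  set p : ℂ × ℝ × ℝ := (z, t, u)
  set o : ℂ × ℝ × ℝ := (0, 0, 0)
  set c : ℂ × ℝ × ℝ := (-2 * k, 8 * k / √3, 0)
  have hpo : extCyganDist p o = √(4 / 3) := by
    rw [extCyganDist, ← h₀]
    simp [p, o, cyganForm, abs_of_nonneg hu]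
  have hpc : extCyganDist p c = √(4 / 3) := by
    rw [extCyganDist, ← hₖ]
    simp [p, c, cyganForm, abs_of_nonneg hu]
  have hoc : ‖cyganForm o c‖ ≤ 16 / 3 := by
    have h := extCyganDist_triangle o p c
    rw [extCyganDist_comm o p, hpo, hpc] at h
    calc ‖cyganForm o c‖ = extCyganDist o c ^ 2 := (Real.sq_sqrt (norm_nonneg _)).symm
      _ ≤ (√(4 / 3) + √(4 / 3)) ^ 2 := pow_le_pow_left₀ (Real.sqrt_nonneg _) h 2
      _ = 16 / 3 := by rw [← two_mul, mul_pow, Real.sq_sqrt (by norm_num)]; norm_num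
  exact hoc.not_gt (sixteen_div_three_lt_norm_cyganForm_zero k hk)
end

section
/- The set of pairs (x,t) ∈ ℝ² satisfying both x⁴ + 2x²/3 + t² = 5/3 and x⁴ + 2x²/3 + (t + 4x/√3)² = 5/3 consists of exactly the four points (0, √15/3), (0, −√15/3), (√((2√6−3)/3), −(2/3)·√(2√6−3)), and (−√((2√6−3)/3), (2/3)·√(2√6−3)). -/
theorem four_triple_intersection_points :
    {p : ℝ × ℝ | p.1 ^ 4 + 2 * p.1 ^ 2 / 3 + p.2 ^ 2 = 5/3 ∧
                 p.1 ^ 4 + 2 * p.1 ^ 2 / 3 + (p.2 + 4 * p.1 / Real.sqrt 3) ^ 2 = 5/3} =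
    {(0, Real.sqrt 15 / 3), (0, -(Real.sqrt 15 / 3)),
     (Real.sqrt ((2 * Real.sqrt 6 - 3) / 3), -(2/3) * Real.sqrt (2 * Real.sqrt 6 - 3)),
     (-Real.sqrt ((2 * Real.sqrt 6 - 3) / 3), (2/3) * Real.sqrt (2 * Real.sqrt 6 - 3))} := by
  have h3 : (0:ℝ) < Real.sqrt 3 := Real.sqrt_pos.mpr (by norm_num)
  have h3sq : Real.sqrt 3 ^ 2 = 3 := Real.sq_sqrt (by norm_num)
  have h6sq : Real.sqrt 6 ^ 2 = 6 := Real.sq_sqrt (by norm_num)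
  have h6 : (2:ℝ) ≤ Real.sqrt 6 := by nlinarith [Real.sqrt_nonneg 6]
  have ha : (0:ℝ) ≤ 2 * Real.sqrt 6 - 3 := by linarith
  have hasq : Real.sqrt (2 * Real.sqrt 6 - 3) ^ 2 = 2 * Real.sqrt 6 - 3 := Real.sq_sqrt ha
  have han : (0:ℝ) ≤ Real.sqrt (2 * Real.sqrt 6 - 3) := Real.sqrt_nonneg _
  have hx2 : Real.sqrt ((2 * Real.sqrt 6 - 3) / 3) ^ 2 = (2 * Real.sqrt 6 - 3) / 3 :=
    Real.sq_sqrt (by linarith)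
  have hxn : (0:ℝ) ≤ Real.sqrt ((2 * Real.sqrt 6 - 3) / 3) := Real.sqrt_nonneg _
  have hxs : Real.sqrt ((2 * Real.sqrt 6 - 3) / 3) * Real.sqrt 3
      = Real.sqrt (2 * Real.sqrt 6 - 3) := by
    rw [← Real.sqrt_mul (by linarith) 3]
    norm_num
  have h15 : Real.sqrt 15 ^ 2 = 15 := Real.sq_sqrt (by norm_num)
  have h15n : (0:ℝ) ≤ Real.sqrt 15 := Real.sqrt_nonneg 15
  have hrw : ∀ y : ℝ, 4 * y / Real.sqrt 3 = 4 * y * Real.sqrt 3 / 3 := by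
    intro y
    rw [div_eq_div_iff h3.ne' (by norm_num)]
    linear_combination (-4*y) * h3sq
  ext ⟨x, t⟩
  simp only [Set.mem_setOf_eq, Set.mem_insert_iff, Set.mem_singleton_iff, Prod.mk.injEq]
  constructor
  · rintro ⟨h1, h2⟩
    rw [hrw] at h2
    have e : (t + 4 * x * Real.sqrt 3 / 3) ^ 2 = t ^ 2 := by linarith
    have key : x * (t * Real.sqrt 3 + 2 * x) = 0 := by
      linear_combination (3/8) * e - (2 * x ^ 2 / 3) * h3sq
    rcases mul_eq_zero.mp key with hx | ht
    · subst hx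
      have h1' : (t - Real.sqrt 15 / 3) * (t + Real.sqrt 15 / 3) = 0 := by
        linear_combination h1 - (1/9) * h15
      rcases mul_eq_zero.mp h1' with h | h
      · left; exact ⟨rfl, by linarith⟩
      · right; left; exact ⟨rfl, by linarith⟩
    · have ht2 : t ^ 2 * 3 = 4 * x ^ 2 := by
        linear_combination (t * Real.sqrt 3 - 2 * x) * ht + (-t^2) * h3sq
      have hq : x ^ 4 + 2 * x ^ 2 = 5 / 3 := by linarith
      have hfac : (3 * x ^ 2 - (2 * Real.sqrt 6 - 3)) * (3 * x ^ 2 + (2 * Real.sqrt 6 + 3)) = 0 := by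
        linear_combination 9 * hq - 4 * h6sq
      have hpos : 3 * x ^ 2 + (2 * Real.sqrt 6 + 3) > 0 := by positivity
      have hx2eq : x ^ 2 = (2 * Real.sqrt 6 - 3) / 3 := by
        rcases mul_eq_zero.mp hfac with h | h
        · linarith
        · linarith
      have hxx : (x - Real.sqrt ((2 * Real.sqrt 6 - 3) / 3)) *
          (x + Real.sqrt ((2 * Real.sqrt 6 - 3) / 3)) = 0 := by
        linear_combination hx2eq - hx2
      rcases mul_eq_zero.mp hxx with h | h
      · right; right; left
        have hxv : x = Real.sqrt ((2 * Real.sqrt 6 - 3) / 3) := by linarith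
        refine ⟨hxv, ?_⟩
        rw [hxv] at ht
        have : t * 3 = -2 * Real.sqrt (2 * Real.sqrt 6 - 3) := by
          linear_combination Real.sqrt 3 * ht + (-t) * h3sq + (-2) * hxs
        linarith
      · right; right; right
        have hxv : x = -Real.sqrt ((2 * Real.sqrt 6 - 3) / 3) := by linarith
        refine ⟨hxv, ?_⟩
        rw [hxv] at ht
        have : t * 3 = 2 * Real.sqrt (2 * Real.sqrt 6 - 3) := by
          linear_combination Real.sqrt 3 * ht + (-t) * h3sq + 2 * hxs
        linarith
  · rintro (⟨hx, ht⟩ | ⟨hx, ht⟩ | ⟨hx, ht⟩ | ⟨hx, ht⟩) <;> subst hx <;> subst ht <;>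
      rw [hrw] <;> constructor
    · linear_combination (1/9) * h15
    · linear_combination (1/9) * h15
    · linear_combination (1/9) * h15
    · linear_combination (1/9) * h15
    · linear_combination
        (Real.sqrt ((2 * Real.sqrt 6 - 3) / 3) ^ 2 + (2 * Real.sqrt 6 - 3) / 3 + 2/3) * hx2
        + (4/9) * hasq + (4/9) * h6sq
    · linear_combination
        (Real.sqrt ((2 * Real.sqrt 6 - 3) / 3) ^ 2 + (2 * Real.sqrt 6 - 3) / 3 + 2/3) * hx2
        + (4/9) * hasq + (4/9) * h6sq
        + (-(4/3) * Real.sqrt (2 * Real.sqrt 6 - 3) + (8/3) * Real.sqrt ((2 * Real.sqrt 6 - 3) / 3) * Real.sqrt 3) * hxs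
        + ((16/9) * Real.sqrt ((2 * Real.sqrt 6 - 3) / 3) ^ 2) * h3sq
        + ((20/9) * Real.sqrt (2 * Real.sqrt 6 - 3)) * hxs
        + (-(8/3) * Real.sqrt ((2 * Real.sqrt 6 - 3) / 3) ^ 2) * h3sq
        + (-(8/3)) * hx2 + (8/9) * hasq
    · linear_combination
        (Real.sqrt ((2 * Real.sqrt 6 - 3) / 3) ^ 2 + (2 * Real.sqrt 6 - 3) / 3 + 2/3) * hx2
        + (4/9) * hasq + (4/9) * h6sq
    · linear_combination
        (Real.sqrt ((2 * Real.sqrt 6 - 3) / 3) ^ 2 + (2 * Real.sqrt 6 - 3) / 3 + 2/3) * hx2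
        + (4/9) * hasq + (4/9) * h6sq
        + (-(4/3) * Real.sqrt (2 * Real.sqrt 6 - 3) + (8/3) * Real.sqrt ((2 * Real.sqrt 6 - 3) / 3) * Real.sqrt 3) * hxs
        + ((16/9) * Real.sqrt ((2 * Real.sqrt 6 - 3) / 3) ^ 2) * h3sq
        + ((20/9) * Real.sqrt (2 * Real.sqrt 6 - 3)) * hxs
        + (-(8/3) * Real.sqrt ((2 * Real.sqrt 6 - 3) / 3) ^ 2) * h3sq
        + (-(8/3)) * hx2 + (8/9) * hasq
end

section
/- Let G₁ be the group with presentation on seven generators α₁, α₂, δ₁, δ₂, δ₃, β₄, β₅ subject to the seven relations β₅²β₄ = 1, β₄⁻¹δ₃β₅ = 1, β₄δ₃⁻¹β₅⁻¹ = 1, δ₁α₁⁻¹δ₂α₂⁻¹ = 1, α₁δ₂⁻¹α₂δ₁⁻¹ = 1, α₂δ₃⁻¹α₁ = 1, β₄δ₂⁻¹β₅⁻¹δ₁⁻¹ = 1. Let G₂ be the group with presentation ⟨s, t, w | s²w⁻¹sts⁻²ws⁻¹t⁻¹ = 1, tw⁻¹t⁻¹w = 1⟩. Then G₁ and G₂ are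 isomorphic. -/
/-! Relations 1, 2, 6 and 7 of `G₁` express `β₄ = β₅⁻²`, `δ₃ = β₅⁻³`, `α₂ = α₁⁻¹β₅⁻³` and
`δ₁ = β₅⁻²δ₂⁻¹β₅⁻¹`, and relation 3 follows from 1 and 2, so `G₁` is generated by `α₁`, `δ₂`, `β₅`.
In the new generators `s = β₅`, `t = β₅²α₁`, `w = δ₂⁻¹` the remaining relations 4 and 5 are
conjugates of the two relations of `G₂`. -/

open FreeGroup

/-- Generators: α₁ = 0, α₂ = 1, δ₁ = 2, δ₂ = 3, δ₃ = 4, β₄ = 5, β₅ = 6.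
The seven cycle relations of the fundamental polytope of the manifold at
infinity of the even subgroup of Δ(3,∞,∞;∞). -/
def rels3pp : Set (FreeGroup (Fin 7)) :=
  { of 6 ^ 2 * of 5,
    (of 5)⁻¹ * of 4 * of 6,
    of 5 * (of 4)⁻¹ * (of 6)⁻¹,
    of 2 * (of 0)⁻¹ * of 3 * (of 1)⁻¹,
    of 0 * (of 3)⁻¹ * of 1 * (of 2)⁻¹,
    of 1 * (of 4)⁻¹ * of 0,
    of 5 * (of 3)⁻¹ * (of 6)⁻¹ * (of 2)⁻¹ }

/-- Generators: s = 0, t = 1, w = 2.  The relations of π₁ of the magic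
3-manifold 6₁³. -/
def relsMagic : Set (FreeGroup (Fin 3)) :=
  { of 0 ^ 2 * (of 2)⁻¹ * of 0 * of 1 * (of 0 ^ 2)⁻¹ * of 2 * (of 0)⁻¹ * (of 1)⁻¹,
    of 1 * (of 2)⁻¹ * (of 1)⁻¹ * of 2 }

def PresentedGroup.mulEquivOfToGroup {α β : Type*} {r : Set (FreeGroup α)}
    {s : Set (FreeGroup β)} {f : α → PresentedGroup s} {g : β → PresentedGroup r}
    (hf : ∀ x ∈ r, FreeGroup.lift f x = 1) (hg : ∀ y ∈ s, FreeGroup.lift g y = 1)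
    (hgf : ∀ a, PresentedGroup.toGroup hg (f a) = PresentedGroup.of a)
    (hfg : ∀ b, PresentedGroup.toGroup hf (g b) = PresentedGroup.of b) :
    PresentedGroup r ≃* PresentedGroup s :=
  (PresentedGroup.toGroup hf).toMulEquiv (PresentedGroup.toGroup hg)
    (PresentedGroup.ext fun a => by simp [hgf])
    (PresentedGroup.ext fun b => by simp [hfg])

theorem eq_one_of_eq_conj {G : Type*} [Group G] {x y : G} (c : G) (hx : x = c * y * c⁻¹)
    (hy : y = 1) : x = 1 :=
  hx ▸ conj_eq_one_iff.mpr hy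

namespace MagicManifold

local notation "G₁" => PresentedGroup rels3pp
local notation "G₂" => PresentedGroup relsMagic
local notation "α₁" => (PresentedGroup.of 0 : G₁)
local notation "α₂" => (PresentedGroup.of 1 : G₁)
local notation "δ₁" => (PresentedGroup.of 2 : G₁)
local notation "δ₂" => (PresentedGroup.of 3 : G₁)
local notation "δ₃" => (PresentedGroup.of 4 : G₁)
local notation "β₄" => (PresentedGroup.of 5 : G₁)
local notation "β₅" => (PresentedGroup.of 6 : G₁)
local notation "𝐬" => (PresentedGroup.of 0 : G₂)
local notation "𝐭" => (PresentedGroup.of 1 : G₂)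
local notation "𝐰" => (PresentedGroup.of 2 : G₂)

theorem β₄_eq : β₄ = (β₅ ^ 2)⁻¹ :=
  eq_inv_of_mul_eq_one_right
    (PresentedGroup.one_of_mem (x := of 6 ^ 2 * of 5) (by simp [rels3pp]))

theorem δ₃_eq : δ₃ = (β₅ ^ 3)⁻¹ := by
  have h : β₄⁻¹ * δ₃ * β₅ = 1 :=
    PresentedGroup.one_of_mem (x := (of 5)⁻¹ * of 4 * of 6) (by simp [rels3pp])
  calc δ₃ = β₄ * (β₄⁻¹ * δ₃ * β₅) * β₅⁻¹ := by group
    _ = (β₅ ^ 3)⁻¹ := by rw [h, β₄_eq]; group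

theorem α₂_eq : α₂ = α₁⁻¹ * (β₅ ^ 3)⁻¹ := by
  have h : α₂ * δ₃⁻¹ * α₁ = 1 :=
    PresentedGroup.one_of_mem (x := of 1 * (of 4)⁻¹ * of 0) (by simp [rels3pp])
  calc α₂ = (α₂ * δ₃⁻¹ * α₁) * α₁⁻¹ * δ₃ := by group
    _ = α₁⁻¹ * (β₅ ^ 3)⁻¹ := by rw [h, δ₃_eq]; group

theorem δ₁_eq : δ₁ = (β₅ ^ 2)⁻¹ * δ₂⁻¹ * β₅⁻¹ := by
  have h : β₄ * δ₂⁻¹ * β₅⁻¹ * δ₁⁻¹ = 1 :=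
    PresentedGroup.one_of_mem (x := of 5 * (of 3)⁻¹ * (of 6)⁻¹ * (of 2)⁻¹) (by simp [rels3pp])
  calc δ₁ = (β₄ * δ₂⁻¹ * β₅⁻¹ * δ₁⁻¹)⁻¹ * β₄ * δ₂⁻¹ * β₅⁻¹ := by group
    _ = (β₅ ^ 2)⁻¹ * δ₂⁻¹ * β₅⁻¹ := by rw [h, β₄_eq]; group

def toMagic : Fin 7 → G₂
  | 0 => (𝐬 ^ 2)⁻¹ * 𝐭
  | 1 => 𝐭⁻¹ * 𝐬⁻¹
  | 2 => (𝐬 ^ 2)⁻¹ * 𝐰 * 𝐬⁻¹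
  | 3 => 𝐰⁻¹
  | 4 => (𝐬 ^ 3)⁻¹
  | 5 => (𝐬 ^ 2)⁻¹
  | 6 => 𝐬

def ofMagic : Fin 3 → G₁
  | 0 => β₅
  | 1 => β₅ ^ 2 * α₁
  | 2 => δ₂⁻¹

theorem lift_toMagic_of_mem : ∀ r ∈ rels3pp, FreeGroup.lift toMagic r = 1 := by
  have h₁ : 𝐬 ^ 2 * 𝐰⁻¹ * 𝐬 * 𝐭 * (𝐬 ^ 2)⁻¹ * 𝐰 * 𝐬⁻¹ * 𝐭⁻¹ = 1 :=
    PresentedGroup.one_of_mem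
      (x := of 0 ^ 2 * (of 2)⁻¹ * of 0 * of 1 * (of 0 ^ 2)⁻¹ * of 2 * (of 0)⁻¹ * (of 1)⁻¹)
      (by simp [relsMagic])
  have h₂ : 𝐭 * 𝐰⁻¹ * 𝐭⁻¹ * 𝐰 = 1 :=
    PresentedGroup.one_of_mem (x := of 1 * (of 2)⁻¹ * (of 1)⁻¹ * of 2) (by simp [relsMagic])
  rintro r (rfl | rfl | rfl | rfl | rfl | rfl | rfl) <;>
    simp only [_root_.map_mul, _root_.map_inv, map_pow, lift_apply_of, toMagic]
  · group
  · group
  · group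
  · exact eq_one_of_eq_conj (𝐭⁻¹ * 𝐬⁻¹ * 𝐰 * (𝐬 ^ 2)⁻¹) (by group) h₁
  · exact eq_one_of_eq_conj ((𝐬 ^ 2)⁻¹ * 𝐰) (by group) (inv_eq_one.2 h₂)
  · group
  · group

theorem lift_ofMagic_of_mem : ∀ r ∈ relsMagic, FreeGroup.lift ofMagic r = 1 := by
  have h₄ : δ₁ * α₁⁻¹ * δ₂ * α₂⁻¹ = 1 :=
    PresentedGroup.one_of_mem (x := of 2 * (of 0)⁻¹ * of 3 * (of 1)⁻¹) (by simp [rels3pp])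
  have h₅ : α₁ * δ₂⁻¹ * α₂ * δ₁⁻¹ = 1 :=
    PresentedGroup.one_of_mem (x := of 0 * (of 3)⁻¹ * of 1 * (of 2)⁻¹) (by simp [rels3pp])
  rw [α₂_eq, δ₁_eq] at h₄ h₅
  rintro r (rfl | rfl) <;>
    simp only [_root_.map_mul, _root_.map_inv, map_pow, lift_apply_of, ofMagic]
  · exact eq_one_of_eq_conj (β₅ ^ 2 * α₁ * β₅ * δ₂ * β₅ ^ 2) (by group) h₄
  · exact eq_one_of_eq_conj (δ₂ * β₅ ^ 2) (by group) (inv_eq_one.2 h₅)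

theorem toGroup_ofMagic_toMagic (i : Fin 7) :
    PresentedGroup.toGroup lift_ofMagic_of_mem (toMagic i) = PresentedGroup.of i := by
  fin_cases i <;>
    simp only [toMagic, _root_.map_mul, _root_.map_inv, map_pow, PresentedGroup.toGroup.of,
      ofMagic, Fin.reduceFinMk, α₂_eq, δ₁_eq, δ₃_eq, β₄_eq] <;>
    group

theorem toGroup_toMagic_ofMagic (i : Fin 3) :
    PresentedGroup.toGroup lift_toMagic_of_mem (ofMagic i) = PresentedGroup.of i := by
  fin_cases i <;>
    simp only [_root_.map_mul, _root_.map_inv, map_pow, PresentedGroup.toGroup.of, ofMagic,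
      toMagic, Fin.reduceFinMk] <;>
    group

end MagicManifold

theorem fundamental_group_is_magic_manifold_group :
    Nonempty (PresentedGroup rels3pp ≃* PresentedGroup relsMagic) :=
  ⟨PresentedGroup.mulEquivOfToGroup MagicManifold.lift_toMagic_of_mem
    MagicManifold.lift_ofMagic_of_mem MagicManifold.toGroup_ofMagic_toMagic
    MagicManifold.toGroup_toMagic_ofMagic⟩
end

section
/- The set of pairs (r,s) ∈ ℝ² satisfying both ((r + 1/4)² + (2r + √7/4)²)² + (r + s − √7/2)² = 4 and ((r − 1/4)² + (2r − √7/4)²)² + (s − r + √7·r − √7/2)² = 4 consists of exactly the two points (0, (√7 + √15)/2) and (0, (√7 − √15)/2). -/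
set_option maxHeartbeats 1000000


theorem two_intersection_points_in_Estar :
    {p : ℝ × ℝ |
      ((p.1 + 1/4) ^ 2 + (2 * p.1 + Real.sqrt 7 / 4) ^ 2) ^ 2 +
        (p.1 + p.2 - Real.sqrt 7 / 2) ^ 2 = 4 ∧
      ((p.1 - 1/4) ^ 2 + (2 * p.1 - Real.sqrt 7 / 4) ^ 2) ^ 2 +
        (p.2 - p.1 + Real.sqrt 7 * p.1 - Real.sqrt 7 / 2) ^ 2 = 4} =
    {(0, (Real.sqrt 7 + Real.sqrt 15) / 2), (0, (Real.sqrt 7 - Real.sqrt 15) / 2)} := by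
  have ha : Real.sqrt 7 ^ 2 = 7 := Real.sq_sqrt (by norm_num)
  have hb : Real.sqrt 15 ^ 2 = 15 := Real.sq_sqrt (by norm_num)
  set a := Real.sqrt 7 with ha_def
  set b := Real.sqrt 15 with hb_def
  have ha2 : 2 < a := by nlinarith [Real.sqrt_nonneg 7]
  have ha3 : a < 3 := by nlinarith [Real.sqrt_nonneg 7]
  ext ⟨r, s⟩
  simp only [Set.mem_setOf_eq, Set.mem_insert_iff, Set.mem_singleton_iff, Prod.mk.injEq]
  constructor
  · rintro ⟨h1, h2⟩
    -- |u| ≤ 2 and |v| ≤ 2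
    have hu2 : (r + s - a / 2) ^ 2 ≤ 4 := by
      nlinarith [sq_nonneg ((r + 1/4) ^ 2 + (2 * r + a / 4) ^ 2)]
    have hv2 : (s - r + a * r - a / 2) ^ 2 ≤ 4 := by
      nlinarith [sq_nonneg ((r - 1/4) ^ 2 + (2 * r - a / 4) ^ 2)]
    have hu : r + s - a / 2 ≤ 2 := by nlinarith [sq_nonneg (r + s - a / 2 - 2)]
    have hv : s - r + a * r - a / 2 ≤ 2 := by nlinarith [sq_nonneg (s - r + a * r - a / 2 - 2)]
    -- key subtraction identity, multiplied by r
    have hsub2 : 4 * (5 * r ^ 2 + 1/2) * (1/2 + a) * r ^ 2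
        = (a - 2) * r ^ 2 * (a * r + 2 * s - a) := by
      linear_combination r * h1 - r * h2 - ((1/2 + a) * r ^ 2 / 4) * ha
    have h4 : r ^ 2 * (4 - ((r + s - a / 2) + (s - r + a * r - a / 2))) ≥ 0 :=
      mul_nonneg (sq_nonneg r) (by linarith)
    have h5 : (a - 2) * (r ^ 2 * (4 - ((r + s - a / 2) + (s - r + a * r - a / 2)))) ≥ 0 :=
      mul_nonneg (by linarith) h4
    have q1 : a * r ^ 4 ≥ 0 :=
      mul_nonneg (by linarith) (by positivity)
    have q2 : (0:ℝ) ≤ r ^ 4 := by positivity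
    have q3 : (3 - a) * r ^ 2 ≥ 0 := mul_nonneg (by linarith) (sq_nonneg r)
    have hr2 : r ^ 2 ≤ 0 := by nlinarith [hsub2, h5, q1, q2, q3]
    have hr : r = 0 := by
      have : r ^ 2 = 0 := le_antisymm hr2 (sq_nonneg r)
      exact pow_eq_zero_iff (by norm_num) |>.mp this
    subst hr
    -- now (s - a/2)^2 = 15/4
    have hs : (s - a / 2 - b / 2) * (s - a / 2 + b / 2) = 0 := by
      linear_combination h1 - (1/16) * ha - (1/4) * hb - ((a^2 - 7)/256) * ha
    rcases mul_eq_zero.mp hs with h | h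
    · left; exact ⟨rfl, by linarith⟩
    · right; exact ⟨rfl, by linarith⟩
  · rintro (⟨hr, hs⟩ | ⟨hr, hs⟩) <;> subst hr <;> subst hs <;> constructor <;>
      · linear_combination (1/16) * ha + (1/4) * hb + ((a^2 - 7)/256) * ha
end
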